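/- arXiv:2001.02851 — 5 statements merged into one kernel-verified Lean document; each statement's English description precedes it below -/
import Mathlib

section
/- Let m ≥ 1 be an integer and σ = 2·cos(2π/(2m+2)). Define the sequence b₀ = 1, b₁ = σ + 1, and b_{i+1} = σ·b_i − b_{i−1} for i ≥ 1. Then b_{m−1} = (σ+1)·b_m. -/
theorem case_I_boundary (m : ℕ) (hm : 1 ≤ m) (b : ℕ → ℝ)
    (hb0 : b 0 = 1) (hb1 : b 1 = 2 * Real.cos (2 * Real.pi / (2 * m + 2)) + 1)
    (hrec : ∀ i, 1 ≤ i →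
      b (i + 1) = 2 * Real.cos (2 * Real.pi / (2 * m + 2)) * b i - b (i - 1)) :
    b (m - 1) = (2 * Real.cos (2 * Real.pi / (2 * m + 2)) + 1) * b m := by
  set θ := 2 * Real.pi / (2 * (m:ℝ) + 2) with hθ
  have hm1 : (0:ℝ) < (m:ℝ) + 1 := by positivity
  have hθ' : θ = Real.pi / ((m:ℝ) + 1) := by
    rw [hθ]; rw [div_eq_div_iff (by positivity) (ne_of_gt hm1)]; ring
  have hθpos : 0 < θ := by rw [hθ']; positivity
  have hθlt : θ < Real.pi := by
    rw [hθ', div_lt_iff₀ hm1]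
    nlinarith [Real.pi_pos, (by exact_mod_cast hm : (1:ℝ) ≤ (m:ℝ))]
  have hs : 0 < Real.sin θ := Real.sin_pos_of_pos_of_lt_pi hθpos hθlt
  have key : ∀ i : ℕ, b i * Real.sin θ
      = Real.sin (((i:ℝ)+1) * θ) + Real.sin ((i:ℝ) * θ) := by
    intro i
    induction i using Nat.twoStepInduction with
    | zero => simp [hb0]
    | one =>
      rw [hb1]
      push_cast
      have e : ((1:ℝ)+1) * θ = 2 * θ := by ring
      rw [e, Real.sin_two_mul]
      ring
    | more i ih ih1 =>
      have hr := hrec (i+1) (by omega)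
      simp only [Nat.add_sub_cancel] at hr
      push_cast at ih ih1 ⊢
      have s1 : Real.sin (((i:ℝ)+2+1) * θ)
          = 2 * Real.cos θ * Real.sin (((i:ℝ)+2) * θ) - Real.sin (((i:ℝ)+1) * θ) := by
        have e1 : ((i:ℝ)+2+1) * θ = ((i:ℝ)+2) * θ + θ := by ring
        have e2 : ((i:ℝ)+1) * θ = ((i:ℝ)+2) * θ - θ := by ring
        rw [e1, e2, Real.sin_add, Real.sin_sub]; ring
      have s2 : Real.sin (((i:ℝ)+2) * θ)
          = 2 * Real.cos θ * Real.sin (((i:ℝ)+1) * θ) - Real.sin ((i:ℝ) * θ) := by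
        have e1 : ((i:ℝ)+2) * θ = ((i:ℝ)+1) * θ + θ := by ring
        have e2 : ((i:ℝ)) * θ = ((i:ℝ)+1) * θ - θ := by ring
        rw [e1, e2, Real.sin_add, Real.sin_sub]; ring
      have hb2 : b (i+2) = 2 * Real.cos θ * b (i+1) - b i := hr
      have e : ((i:ℝ)+1+1) = (i:ℝ)+2 := by ring
      rw [e] at ih1
      rw [hb2]
      linear_combination (2 * Real.cos θ) * ih1 - ih - s1 - s2
  have hsum : ((m:ℝ)+1) * θ = Real.pi := by
    rw [hθ']; field_simp
  have hmθ : (m:ℝ) * θ = Real.pi - θ := by linarith [hsum]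
  have hm1θ : ((m:ℝ)-1) * θ = Real.pi - 2*θ := by nlinarith [hsum]
  have km := key m
  rw [show ((m:ℝ)+1) * θ = Real.pi from hsum, Real.sin_pi, hmθ, Real.sin_pi_sub] at km
  have kbm : b m = 1 := by
    have h : b m * Real.sin θ = 1 * Real.sin θ := by linarith [km]
    exact mul_right_cancel₀ (ne_of_gt hs) h
  have k1 := key (m-1)
  have hc : ((m-1 : ℕ) : ℝ) = (m:ℝ) - 1 := by
    have := Nat.cast_sub hm (R := ℝ); simpa using this
  rw [hc] at k1
  have e : ((m:ℝ) - 1 + 1) * θ = (m:ℝ) * θ := by ring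
  rw [e, hmθ, Real.sin_pi_sub, hm1θ, Real.sin_pi_sub] at k1
  have h2θ : Real.sin (2*θ) = 2 * Real.sin θ * Real.cos θ := Real.sin_two_mul θ
  rw [h2θ] at k1
  have hbm1 : b (m-1) = 1 + 2 * Real.cos θ := by
    have h : b (m-1) * Real.sin θ = (1 + 2 * Real.cos θ) * Real.sin θ := by
      rw [k1]; ring
    exact mul_right_cancel₀ (ne_of_gt hs) h
  rw [hbm1, kbm]
  ring
end

section
/- Let m ≥ 1 be an integer and σ = 2·cos(2π/(2m+1)). Define the sequence b₀ = 1, b₁ = σ + 1, and b_{i+1} = σ·b_i − b_{i−1} for i ≥ 1. Then b_m = 0. -/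
theorem case_II_boundary (m : ℕ) (hm : 1 ≤ m) (b : ℕ → ℝ)
    (hb0 : b 0 = 1) (hb1 : b 1 = 2 * Real.cos (2 * Real.pi / (2 * m + 1)) + 1)
    (hrec : ∀ i, 1 ≤ i →
      b (i + 1) = 2 * Real.cos (2 * Real.pi / (2 * m + 1)) * b i - b (i - 1)) :
    b m = 0 := by
  set θ : ℝ := 2 * Real.pi / (2 * m + 1) with hθ
  have hm1 : (1:ℝ) ≤ (m:ℝ) := by exact_mod_cast hm
  have hden : (0:ℝ) < 2 * m + 1 := by linarith
  have hθpos : 0 < θ := div_pos (by linarith [Real.pi_pos]) hden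
  have hθlt : θ < Real.pi := by
    rw [hθ, div_lt_iff₀ hden]
    nlinarith [Real.pi_pos]
  have hsin : Real.sin θ ≠ 0 := ne_of_gt (Real.sin_pos_of_pos_of_lt_pi hθpos hθlt)
  have sinstep : ∀ x : ℝ, Real.sin (x + θ) = 2 * Real.cos θ * Real.sin x - Real.sin (x - θ) := by
    intro x
    rw [Real.sin_add, Real.sin_sub]
    ring
  have key : ∀ i : ℕ, b i * Real.sin θ = Real.sin ((i+1) * θ) + Real.sin (i * θ) ∧
      b (i+1) * Real.sin θ = Real.sin ((i+2) * θ) + Real.sin ((i+1) * θ) := by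
    intro i
    induction i with
    | zero =>
      refine ⟨by simp [hb0], ?_⟩
      rw [hb1]
      push_cast
      rw [show ((0:ℝ)+2) * θ = θ + θ by ring, Real.sin_add,
        show ((0:ℝ)+1) * θ = θ by ring]
      ring
    | succ n ih =>
      refine ⟨by push_cast; convert ih.2 using 3 <;> ring, ?_⟩
      have hr := hrec (n+1) (by omega)
      simp only [Nat.add_sub_cancel] at hr
      rw [hr, sub_mul, mul_assoc, ih.1, ih.2]
      push_cast
      have e1 : ((n:ℝ)+1+2) * θ = ((n:ℝ)+2) * θ + θ := by ring
      have e2 : ((n:ℝ)+1+1) * θ = ((n:ℝ)+1) * θ + θ := by ring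
      have e3 : ((n:ℝ)+2) * θ - θ = ((n:ℝ)+1) * θ := by ring
      have e4 : ((n:ℝ)+1) * θ - θ = (n:ℝ) * θ := by ring
      rw [e1, e2, sinstep, sinstep, e3, e4]
      ring
  have hkm := (key m).1
  have hzero : Real.sin (((m:ℝ)+1) * θ) + Real.sin ((m:ℝ) * θ) = 0 := by
    have hsum : ((m:ℝ)+1) * θ = 2 * Real.pi - (m:ℝ) * θ := by
      have : ((2:ℝ) * m + 1) * θ = 2 * Real.pi := by
        rw [hθ]; field_simp
      linarith [this]
    rw [hsum, Real.sin_sub, Real.sin_two_pi, Real.cos_two_pi]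
    ring
  have : b m * Real.sin θ = 0 := by rw [hkm]; exact hzero
  exact (mul_eq_zero.mp this).resolve_right hsin
end

section
/- Let m ≥ 1 be an integer and σ = 2·cos(2π/(2m+1)). Define the sequence b₀ = 0, b₁ = 1, and b_{i+1} = σ·b_i − b_{i−1} for i ≥ 1. Then b_{m−1} = (σ+1)·b_m. -/
theorem case_III_boundary (m : ℕ) (hm : 1 ≤ m) (b : ℕ → ℝ)
    (hb0 : b 0 = 0) (hb1 : b 1 = 1)
    (hrec : ∀ i, 1 ≤ i →
      b (i + 1) = 2 * Real.cos (2 * Real.pi / (2 * m + 1)) * b i - b (i - 1)) :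
    b (m - 1) = (2 * Real.cos (2 * Real.pi / (2 * m + 1)) + 1) * b m := by
  set θ : ℝ := 2 * Real.pi / (2 * m + 1) with hθ
  have hmpos : (0:ℝ) < 2 * m + 1 := by positivity
  have hθpos : 0 < θ := by
    apply div_pos (by positivity) hmpos
  have hθlt : θ < Real.pi := by
    rw [hθ, div_lt_iff₀ hmpos]
    have h1 : (1:ℝ) ≤ (m:ℝ) := by exact_mod_cast hm
    nlinarith [Real.pi_pos]
  have hs : Real.sin θ ≠ 0 := ne_of_gt (Real.sin_pos_of_pos_of_lt_pi hθpos hθlt)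
  have key : ∀ i : ℕ, b i * Real.sin θ = Real.sin (i * θ) := by
    intro i
    induction i using Nat.strong_induction_on with
    | _ i ih =>
      match i with
      | 0 => simp [hb0]
      | 1 => simp [hb1]
      | (k+2) =>
        have h1 := ih (k+1) (by omega)
        have h0 := ih k (by omega)
        have hr := hrec (k+1) (by omega)
        simp only [Nat.add_sub_cancel] at hr
        rw [hr]
        have e2 : ((k+2:ℕ):ℝ) * θ = ((k+1:ℕ):ℝ) * θ + θ := by push_cast; ring
        have e0 : ((k:ℕ):ℝ) * θ = ((k+1:ℕ):ℝ) * θ - θ := by push_cast; ring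
        rw [e2, Real.sin_add]
        rw [e0, Real.sin_sub] at h0
        linear_combination 2 * Real.cos θ * h1 - h0
  -- get n with m = n + 1
  obtain ⟨n, rfl⟩ : ∃ n, m = n + 1 := ⟨m - 1, by omega⟩
  simp only [Nat.add_sub_cancel]
  have hn := key n
  have hn1 := key (n+1)
  have hn2 := key (n+2)
  -- (2n+3) θ = 2π, so sin((n+2)θ) = -sin((n+1)θ)
  have hfull : ((n+2:ℕ):ℝ) * θ = 2 * Real.pi - ((n+1:ℕ):ℝ) * θ := by
    have : (2 * ((n:ℝ)+1) + 1) * θ = 2 * Real.pi := by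
      rw [hθ]; push_cast; field_simp
    push_cast at this ⊢
    linarith
  have hsin2 : Real.sin (((n+2:ℕ):ℝ) * θ) = - Real.sin (((n+1:ℕ):ℝ) * θ) := by
    rw [hfull]
    rw [show (2 * Real.pi - ((n+1:ℕ):ℝ) * θ) = -( ((n+1:ℕ):ℝ) * θ) + 2*Real.pi by ring]
    rw [Real.sin_add_two_pi, Real.sin_neg]
  -- sin((n+2)θ) = sin((n+1)θ + θ), sin(nθ) = sin((n+1)θ − θ)
  have e2 : ((n+2:ℕ):ℝ) * θ = ((n+1:ℕ):ℝ) * θ + θ := by push_cast; ring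
  have e0 : ((n:ℕ):ℝ) * θ = ((n+1:ℕ):ℝ) * θ - θ := by push_cast; ring
  rw [e2, Real.sin_add] at hn2 hsin2
  rw [e0, Real.sin_sub] at hn
  -- goal: b n = (2 cos θ + 1) * b (n+1)
  have goal' : b n * Real.sin θ = ((2 * Real.cos θ + 1) * b (n+1)) * Real.sin θ := by
    linear_combination hn - hsin2 - (2 * Real.cos θ + 1) * hn1
  exact mul_right_cancel₀ hs goal'
end

section
/- Suppose U is a nonzero complex number with U + 1/U = σ for a real σ ≠ ±2, u = (U−1)/(σ−2), v = (1/U−1)/(σ−2), and u·U^m·(U+1) + v·(1/U)^m·(1/U + 1) = 0 for an integer m ≥ 1. Then U^{2m+2} = 1. -/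
/-!
Multiplying the boundary condition by `σ - 2` clears `u` and `v`, and multiplying the result by
`U ^ (m + 2)` turns it into the polynomial identity `(U ^ 2 - 1) * (U ^ (2 * m + 2) - 1) = 0`.
Since `σ = U + U⁻¹ ≠ ±2`, the root `U` is not `±1`, so the second factor vanishes.
-/

section Field

variable {K : Type*} [Field K]

lemma sq_ne_one_of_add_inv_ne {U : K} (h2 : U + U⁻¹ ≠ 2) (h2' : U + U⁻¹ ≠ -2) : U ^ 2 ≠ 1 := by
  intro h
  rcases mul_self_eq_one_iff.mp ((sq U).symm.trans h) with rfl | rfl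
  · norm_num at h2
  · norm_num at h2'

lemma pow_mul_boundary_sum_eq {U : K} (hU : U ≠ 0) (m : ℕ) :
    U ^ (m + 2) * ((U - 1) * U ^ m * (U + 1) + (U⁻¹ - 1) * U⁻¹ ^ m * (U⁻¹ + 1))
      = (U ^ 2 - 1) * (U ^ (2 * m + 2) - 1) := by
  have hinv : U ^ m * U⁻¹ ^ m = 1 := by rw [← mul_pow, mul_inv_cancel₀ hU, one_pow]
  field_simp
  linear_combination (U ^ 2 - U ^ 4) * hinv

lemma pow_two_mul_add_two_eq_one_of_boundary_sum_eq_zero {U : K} (hU : U ≠ 0) (hU2 : U ^ 2 ≠ 1)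
    (m : ℕ) (h : (U - 1) * U ^ m * (U + 1) + (U⁻¹ - 1) * U⁻¹ ^ m * (U⁻¹ + 1) = 0) :
    U ^ (2 * m + 2) = 1 := by
  have key := pow_mul_boundary_sum_eq hU m
  rw [h, mul_zero, eq_comm, mul_eq_zero] at key
  exact sub_eq_zero.mp (key.resolve_left (sub_ne_zero.mpr hU2))

end Field

theorem root_of_unity_step_general (U : ℂ) (hU : U ≠ 0) (σ : ℝ)
    (hσU : U + 1 / U = (σ : ℂ)) (hσ2 : σ ≠ 2) (hσ2' : σ ≠ -2)
    (u v : ℂ) (hu : u = (U - 1) / ((σ : ℂ) - 2)) (hv : v = (1 / U - 1) / ((σ : ℂ) - 2))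
    (m : ℕ)
    (hbc : u * U ^ m * (U + 1) + v * (1 / U) ^ m * (1 / U + 1) = 0) :
    U ^ (2 * m + 2) = 1 := by
  rw [one_div] at hσU hv hbc
  have hσ : (σ : ℂ) - 2 ≠ 0 := sub_ne_zero.mpr (by exact_mod_cast hσ2)
  have hU2 : U ^ 2 ≠ 1 :=
    sq_ne_one_of_add_inv_ne (by rw [hσU]; exact_mod_cast hσ2) (by rw [hσU]; exact_mod_cast hσ2')
  have hcleared : ((U - 1) * U ^ m * (U + 1) + (U⁻¹ - 1) * U⁻¹ ^ m * (U⁻¹ + 1)) / ((σ : ℂ) - 2)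
      = 0 := by
    rw [← hbc, hu, hv]; ring
  exact pow_two_mul_add_two_eq_one_of_boundary_sum_eq_zero hU hU2 m
    ((div_eq_zero_iff.mp hcleared).resolve_right hσ)

theorem root_of_unity_step (U : ℂ) (hU : U ≠ 0) (σ : ℝ)
    (hσU : U + 1 / U = (σ : ℂ)) (hσ2 : σ ≠ 2) (hσ2' : σ ≠ -2)
    (u v : ℂ) (hu : u = (U - 1) / ((σ : ℂ) - 2)) (hv : v = (1 / U - 1) / ((σ : ℂ) - 2))
    (m : ℕ) (hm : 1 ≤ m)
    (hbc : u * U ^ m * (U + 1) + v * (1 / U) ^ m * (1 / U + 1) = 0) :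
    U ^ (2 * m + 2) = 1 :=
  root_of_unity_step_general U hU σ hσU hσ2 hσ2' u v hu hv m hbc
end

section
/- Let n = 2k be even, θ = 2π/(n+2), and for i ∈ [1:k] define ℓ_{2i} = ℓ_{2i−1} = 2sin(θ)sin(iθ)/(cos(iθ) − cos((i+1)θ)). Then ℓ₁ ≤ ℓ₂ ≤ … ≤ ℓ_n, i.e., the map i ↦ 2sin(θ)sin(iθ)/(cos(iθ) − cos((i+1)θ)) is nondecreasing in i on [1:k]. -/
/-!
Write `θ = 2π/(n+2)`, so that `(k+1)θ = π`. The cross-multiplied difference of consecutive terms is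
independent of `i`: for every `x`,
`sin (x+θ) (cos x - cos (x+θ)) - sin x (cos (x+θ) - cos (x+2θ)) = sin θ (1 - cos θ) ≥ 0`,
while the denominators `cos (iθ) - cos ((i+1)θ)` are positive because `cos` decreases on `[0, π]`.
-/

open Real

lemma sin_add_mul_cos_sub_cos_sub_sin_mul_cos_sub_cos (x θ : ℝ) :
    sin (x + θ) * (cos x - cos (x + θ)) - sin x * (cos (x + θ) - cos (x + θ + θ)) =
      sin θ * (1 - cos θ) := by
  simp only [sin_add, cos_add]
  linear_combination sin θ * (1 - cos θ) * sin_sq_add_cos_sq x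

lemma cos_sub_cos_add_pos {x θ : ℝ} (hθ : 0 < θ) (hx : 0 ≤ x) (hxθ : x + θ ≤ π) :
    0 < cos x - cos (x + θ) :=
  sub_pos.mpr <| cos_lt_cos_of_nonneg_of_le_pi hx hxθ (lt_add_of_pos_right x hθ)

lemma sin_div_cos_sub_cos_add_le {x θ : ℝ} (hθ : 0 < θ) (hx : 0 ≤ x) (hxθ : x + 2 * θ ≤ π) :
    sin x / (cos x - cos (x + θ)) ≤ sin (x + θ) / (cos (x + θ) - cos (x + θ + θ)) := by
  have hθπ : θ ≤ π := by linarith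
  rw [div_le_div_iff₀ (cos_sub_cos_add_pos hθ hx (by linarith))
    (cos_sub_cos_add_pos hθ (by linarith) (by linarith))]
  have hgap : 0 ≤ sin θ * (1 - cos θ) :=
    mul_nonneg (sin_nonneg_of_nonneg_of_le_pi hθ.le hθπ) (sub_nonneg.mpr (cos_le_one θ))
  linarith [sin_add_mul_cos_sub_cos_sub_sin_mul_cos_sub_cos x θ]

lemma monotoneOn_sin_mul_div_cos_sub_cos {θ : ℝ} {n : ℕ} (hθ : 0 < θ) (hn : (n + 1) * θ ≤ π) :
    MonotoneOn (fun i : ℕ => sin (i * θ) / (cos (i * θ) - cos ((i + 1) * θ)))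
      (Set.Icc 0 n) := by
  refine monotoneOn_of_le_add_one Set.ordConnected_Icc fun i _ _ hi => ?_
  have hin : (i : ℝ) + 1 ≤ n := by exact_mod_cast hi.2
  have hstep := sin_div_cos_sub_cos_add_le (x := i * θ) hθ (by positivity) (by nlinarith)
  have e₀ : ((i : ℝ) + 1) * θ = i * θ + θ := by ring
  have e₁ : ((i + 1 : ℕ) : ℝ) * θ = i * θ + θ := by push_cast; ring
  have e₂ : (((i + 1 : ℕ) : ℝ) + 1) * θ = i * θ + θ + θ := by push_cast; ring
  simpa only [e₀, e₁, e₂] using hstep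

theorem left_links_monotone_general (k : ℕ) :
    MonotoneOn
      (fun i : ℕ =>
        2 * Real.sin (2 * Real.pi / (2 * k + 2)) *
            Real.sin (i * (2 * Real.pi / (2 * k + 2))) /
          (Real.cos (i * (2 * Real.pi / (2 * k + 2))) -
            Real.cos ((i + 1) * (2 * Real.pi / (2 * k + 2)))))
      (Set.Icc 1 k) := by
  set θ : ℝ := 2 * π / (2 * k + 2)
  have hθ : 0 < θ := by positivity
  have hkθ : ((k : ℝ) + 1) * θ = π := by simp only [θ]; field_simp
  have hsin : 0 ≤ 2 * sin θ :=
    mul_nonneg zero_le_two (sin_nonneg_of_nonneg_of_le_pi hθ.le (by nlinarith))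
  have hmono := (monotoneOn_sin_mul_div_cos_sub_cos hθ hkθ.le).mono
    (Set.Icc_subset_Icc_left zero_le_one)
  intro a ha b hb hab
  simp only [mul_div_assoc]
  exact mul_le_mul_of_nonneg_left (hmono ha hb hab) hsin

theorem left_links_monotone (k : ℕ) (hk : 1 ≤ k) :
    MonotoneOn
      (fun i : ℕ =>
        2 * Real.sin (2 * Real.pi / (2 * k + 2)) *
            Real.sin (i * (2 * Real.pi / (2 * k + 2))) /
          (Real.cos (i * (2 * Real.pi / (2 * k + 2))) -
            Real.cos ((i + 1) * (2 * Real.pi / (2 * k + 2)))))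
      (Set.Icc 1 k) :=
  left_links_monotone_general k
end
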